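/- Let α, α₁, α₂ ∈ ℝ with α ≠ 0 and α·α₂ < 0. For j ∈ ℕ and t ∈ ℝ define c_j(t) = ∫₀^∞ s^j e^{jαt} exp((α₁/α) s e^{αt} + (α₂/(2α)) s² e^{2αt}) ds. Then each integral converges, each c_j is differentiable on ℝ, and the moments simultaneously satisfy c_j'(t) = α j c_j(t) + α₁ c_{j+1}(t) + α₂ c_{j+2}(t) and c_j'(t) = −α c_j(t) for all j ∈ ℕ and all t ∈ ℝ (equivalently, (j+1)α c_j(t) + α₁ c_{j+1}(t) + α₂ c_{j+2}(t) = 0). -/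

import Mathlib

/-!
The substitution `u = e^{αt} s` shows `c_j(t) = e^{-αt} c_j(0)`, whence `c_j' = -α c_j`.
Integrating the derivative of `u^{j+1} exp((α₁/α) u + (α₂/(2α)) u²)` over `(0, ∞)` gives
`(j+1) c_j(0) + (α₁/α) c_{j+1}(0) + (α₂/α) c_{j+2}(0) = 0`; multiplied by `α e^{-αt}` this turns
`c_j' = -α c_j` into the evolution equation `c_j' = α j c_j + α₁ c_{j+1} + α₂ c_{j+2}`.
-/

open MeasureTheory

/-- The deformed moments `c_j(t) = ∫₀^∞ s^j e^{jαt} exp((α₁/α) s e^{αt} + (α₂/(2α)) s² e^{2αt}) ds`. -/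
noncomputable def deformedMoment (α α₁ α₂ : ℝ) (j : ℕ) (t : ℝ) : ℝ :=
  ∫ s in Set.Ioi (0 : ℝ),
    s ^ j * Real.exp ((j : ℝ) * α * t) *
      Real.exp (α₁ / α * s * Real.exp (α * t) + α₂ / (2 * α) * s ^ 2 * Real.exp (2 * α * t))

open Set Filter Real

section QuadraticExponentialWeight

variable {a b : ℝ}

lemma mul_add_mul_sq_le (hb : b < 0) (s : ℝ) :
    a * s + b * s ^ 2 ≤ a ^ 2 / (-2 * b) + b / 2 * s ^ 2 := by
  have h2b : 0 < -2 * b := by linarith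
  have h : a * s + b * s ^ 2 - b / 2 * s ^ 2 ≤ a ^ 2 / (-2 * b) := by
    rw [le_div_iff₀ h2b]
    nlinarith [sq_nonneg (b * s + a)]
  linarith

lemma integrableOn_pow_mul_exp_quadratic (j : ℕ) (hb : b < 0) :
    IntegrableOn (fun s : ℝ => s ^ j * exp (a * s + b * s ^ 2)) (Ioi 0) := by
  have hgauss : IntegrableOn (fun s : ℝ => s ^ j * exp (b / 2 * s ^ 2)) (Ioi 0) := by
    have h := integrableOn_rpow_mul_exp_neg_mul_sq (b := -(b / 2)) (by linarith)
      (s := j) (by linarith [(Nat.cast_nonneg j : (0 : ℝ) ≤ j)])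
    simpa only [rpow_natCast, neg_neg] using h
  refine (hgauss.const_mul (exp (a ^ 2 / (-2 * b)))).mono' (by fun_prop) ?_
  filter_upwards [ae_restrict_mem measurableSet_Ioi] with s (hs : 0 < s)
  rw [norm_mul, norm_pow, Real.norm_of_nonneg hs.le, Real.norm_of_nonneg (exp_pos _).le]
  calc s ^ j * exp (a * s + b * s ^ 2)
      ≤ s ^ j * exp (a ^ 2 / (-2 * b) + b / 2 * s ^ 2) :=
        mul_le_mul_of_nonneg_left (exp_le_exp.2 (mul_add_mul_sq_le hb s)) (by positivity)
    _ = exp (a ^ 2 / (-2 * b)) * (s ^ j * exp (b / 2 * s ^ 2)) := by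
        rw [exp_add]; ring

noncomputable def quadExpMoment (a b : ℝ) (j : ℕ) : ℝ :=
  ∫ u in Ioi (0 : ℝ), u ^ j * exp (a * u + b * u ^ 2)

lemma quadExpMoment_recurrence (j : ℕ) (hb : b < 0) :
    (j + 1) * quadExpMoment a b j + a * quadExpMoment a b (j + 1)
      + 2 * b * quadExpMoment a b (j + 2) = 0 := by
  set w : ℕ → ℝ → ℝ := fun k u => u ^ k * exp (a * u + b * u ^ 2) with hw
  have hint : ∀ k, IntegrableOn (w k) (Ioi 0) := fun k => integrableOn_pow_mul_exp_quadratic k hb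
  have hderiv : ∀ u ∈ Ici (0 : ℝ), HasDerivAt (w (j + 1))
      ((j + 1) * w j u + a * w (j + 1) u + 2 * b * w (j + 2) u) u := by
    intro u _
    have hφ : HasDerivAt (fun u => a * u + b * u ^ 2) (a + b * (2 * u)) u :=
      (((hasDerivAt_id u).const_mul a).add ((hasDerivAt_pow 2 u).const_mul b)).congr_deriv
        (by simp)
    refine ((hasDerivAt_pow (j + 1) u).mul hφ.exp).congr_deriv ?_
    simp only [hw, Nat.add_sub_cancel]
    push_cast
    ring
  have hint_deriv := (((hint j).const_mul (j + 1 : ℝ)).add ((hint (j + 1)).const_mul a)).add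
    ((hint (j + 2)).const_mul (2 * b))
  have hibp := integral_Ioi_of_hasDerivAt_of_tendsto' hderiv hint_deriv
    (tendsto_zero_of_hasDerivAt_of_integrableOn_Ioi (fun u hu => hderiv u (mem_Ici_of_Ioi hu))
      hint_deriv (hint (j + 1)))
  rw [integral_add ?_ ((hint (j + 2)).const_mul _), integral_add ((hint j).const_mul _)
      ((hint (j + 1)).const_mul _), integral_const_mul, integral_const_mul, integral_const_mul] at hibp
  · simpa [hw, quadExpMoment] using hibp
  · exact ((hint j).const_mul _).add ((hint (j + 1)).const_mul _)

end QuadraticExponentialWeight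

lemma deformedMoment_eq_exp_mul_quadExpMoment (α α₁ α₂ : ℝ) (j : ℕ) (t : ℝ) :
    deformedMoment α α₁ α₂ j t = exp (-(α * t)) * quadExpMoment (α₁ / α) (α₂ / (2 * α)) j := by
  have hscale := integral_comp_mul_left_Ioi
    (fun u : ℝ => u ^ j * exp (α₁ / α * u + α₂ / (2 * α) * u ^ 2)) 0 (exp_pos (α * t))
  rw [mul_zero, smul_eq_mul, ← exp_neg] at hscale
  rw [deformedMoment, quadExpMoment, ← hscale]
  congr 1 with s
  have hpow : ∀ n : ℕ, exp (n * α * t) = exp (α * t) ^ n := fun n => by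
    rw [← exp_nat_mul]; ring_nf
  rw [hpow, show 2 * α * t = ((2 : ℕ) : ℝ) * α * t by norm_num, hpow]
  ring_nf

lemma hasDerivAt_deformedMoment (α α₁ α₂ : ℝ) (j : ℕ) (t : ℝ) :
    HasDerivAt (deformedMoment α α₁ α₂ j) (-α * deformedMoment α α₁ α₂ j t) t := by
  have hfun : deformedMoment α α₁ α₂ j =
      fun u => exp (-(α * u)) * quadExpMoment (α₁ / α) (α₂ / (2 * α)) j :=
    funext (deformedMoment_eq_exp_mul_quadExpMoment α α₁ α₂ j)
  rw [hfun]
  refine ((((hasDerivAt_id t).const_mul α).neg.exp).mul_const _).congr_deriv ?_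
  simp only [id, Pi.neg_apply]
  ring

lemma div_two_mul_neg_of_mul_neg {x y : ℝ} (h : x * y < 0) : y / (2 * x) < 0 := by
  rcases mul_neg_iff.1 h with ⟨hx, hy⟩ | ⟨hx, hy⟩
  · exact div_neg_of_neg_of_pos hy (by linarith)
  · exact div_neg_of_pos_of_neg hy (by linarith)

lemma integrableOn_deformedMoment_integrand {α α₁ α₂ : ℝ} (hαα₂ : α * α₂ < 0) (j : ℕ) (t : ℝ) :
    IntegrableOn
      (fun s : ℝ => s ^ j * exp ((j : ℝ) * α * t) *
        exp (α₁ / α * s * exp (α * t) + α₂ / (2 * α) * s ^ 2 * exp (2 * α * t)))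
      (Ioi (0 : ℝ)) := by
  have hb : α₂ / (2 * α) * exp (2 * α * t) < 0 :=
    mul_neg_of_neg_of_pos (div_two_mul_neg_of_mul_neg hαα₂) (exp_pos _)
  refine IntegrableOn.congr_fun ((integrableOn_pow_mul_exp_quadratic (a := α₁ / α * exp (α * t))
    j hb).const_mul (exp (j * α * t))) (fun s _ => ?_) measurableSet_Ioi
  ring_nf

lemma deformedMoment_recurrence {α α₁ α₂ : ℝ} (hαα₂ : α * α₂ < 0) (j : ℕ) (t : ℝ) :
    α * (j + 1) * deformedMoment α α₁ α₂ j t + α₁ * deformedMoment α α₁ α₂ (j + 1) t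
      + α₂ * deformedMoment α α₁ α₂ (j + 2) t = 0 := by
  have hα : α ≠ 0 := left_ne_zero_of_mul hαα₂.ne
  have hrec := quadExpMoment_recurrence (a := α₁ / α) j (div_two_mul_neg_of_mul_neg hαα₂)
  have h₁ : α * (α₁ / α) = α₁ := mul_div_cancel₀ α₁ hα
  have h₂ : α * (2 * (α₂ / (2 * α))) = α₂ := by field_simp
  simp only [deformedMoment_eq_exp_mul_quadExpMoment]
  set e := exp (-(α * t))
  linear_combination (e * α) * hrec - (e * quadExpMoment (α₁ / α) (α₂ / (2 * α)) (j + 1)) * h₁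
    - (e * quadExpMoment (α₁ / α) (α₂ / (2 * α)) (j + 2)) * h₂

theorem deformedMoment_evolution (α α₁ α₂ : ℝ) (hαα₂ : α * α₂ < 0) :
    (∀ (j : ℕ) (t : ℝ), IntegrableOn
      (fun s : ℝ => s ^ j * Real.exp ((j : ℝ) * α * t) *
        Real.exp (α₁ / α * s * Real.exp (α * t) + α₂ / (2 * α) * s ^ 2 * Real.exp (2 * α * t)))
      (Set.Ioi (0 : ℝ))) ∧
    (∀ (j : ℕ) (t : ℝ), HasDerivAt (fun u => deformedMoment α α₁ α₂ j u)
      (α * (j : ℝ) * deformedMoment α α₁ α₂ j t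
        + α₁ * deformedMoment α α₁ α₂ (j + 1) t
        + α₂ * deformedMoment α α₁ α₂ (j + 2) t) t) ∧
    (∀ (j : ℕ) (t : ℝ), HasDerivAt (fun u => deformedMoment α α₁ α₂ j u)
      (-α * deformedMoment α α₁ α₂ j t) t) := by
  refine ⟨integrableOn_deformedMoment_integrand hαα₂, fun j t => ?_,
    hasDerivAt_deformedMoment α α₁ α₂⟩
  exact (hasDerivAt_deformedMoment α α₁ α₂ j t).congr_deriv
    (by linear_combination -deformedMoment_recurrence (α₁ := α₁) hαα₂ j t)
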